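/- Let k ≥ 1 be an integer and β(1),…,β(k) real numbers, with f, B and r as defined. Define for t ≥ 2 the iterated integral I(t) = ∫₁^t u₁^{β(1)} ( ∫_{u₁}^t u₂^{β(2)} ( ⋯ ( ∫_{u_{k−1}}^t u_k^{β(k)} du_k ) ⋯ ) du₂ ) du₁. Then there exist a constant C₁ > 0 and t₀ ≥ 2 such that I(t) ≥ C₁ · t^{k+B} (log t)^{r−1} for all t ≥ t₀. -/

import Mathlib

open Finset Real MeasureTheory intervalIntegral

/-- `f k β s = -s + ∑_{i=s+1}^k β i`. -/
noncomputable def maxF (k : ℕ) (β : ℕ → ℝ) (s : ℕ) : ℝ :=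
  -(s : ℝ) + ∑ i ∈ Finset.Icc (s + 1) k, β i

/-- `B = max_{s ∈ {0,…,k}} f s`. -/
noncomputable def maxB (k : ℕ) (β : ℕ → ℝ) : ℝ :=
  (Finset.range (k + 1)).sup' (by simp) (maxF k β)

/-- `r` = number of maximizers of `f` on `{0,…,k}`. -/
noncomputable def numMax (k : ℕ) (β : ℕ → ℝ) : ℕ :=
  ((Finset.range (k + 1)).filter fun s => maxF k β s = maxB k β).card

/-- `nestInt β t n j a` is the iterated integral
`∫_a^t u_j^{β j} ( ∫_{u_j}^t u_{j+1}^{β (j+1)} ( ⋯ ) du_{j+1} ) du_j` with `n` integrals. -/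
noncomputable def nestInt (β : ℕ → ℝ) (t : ℝ) : ℕ → ℕ → ℝ → ℝ
  | 0, _, _ => 1
  | n + 1, j, a => ∫ u in a..t, u ^ β j * nestInt β t n (j + 1) u

/-!
Peel off the outermost integral: with `β' i = β (i + 1)`,
`nestInt β t (k + 1) 1 a = ∫ u in a..t, u ^ β 1 * nestInt β' t k 1 u`, and `f` on `{1,…,k+1}`
is `f' - 1` on `{0,…,k}` for the data `β'`. By induction on `k`, the tail integral is at least
`c a ^ (f 0 - B) t ^ (k + B) (log t) ^ (r - 1)`, uniformly in `1 ≤ a ≤ t ^ 2⁻ᵏ`. Inserting this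
bound for `β'`, the integrand is a multiple of `u ^ γ` with `γ + 1 = f 0 - (B' - 1)`:
* if `f 0 > B' - 1`, then `0` is the only maximizer and the mass sits at `u ≈ t`, where a crude
  bound (every variable integrated over a dyadic interval) gives `t ^ (k + 1 + f 0)`;
* if `f 0 = B' - 1`, then `γ = -1`, and integrating over `[a, x ^ 2]` with `x = t ^ 2⁻ᵏ⁻¹ ≥ a`
  gains the factor `log (x ^ 2 / a) ≥ log x = 2⁻ᵏ⁻¹ log t`; this is why the range of `a`
  shrinks geometrically with the depth;
* if `f 0 < B' - 1`, then `γ < -1` and the mass sits at `u ≈ a`: integrate over `[a, 2 a]`.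
-/

section Maximizers

variable (k : ℕ) (β : ℕ → ℝ)

lemma sum_Icc_succ_succ_eq (s : ℕ) :
    ∑ i ∈ Icc (s + 1) (k + 1), β i = ∑ i ∈ Icc s k, β (i + 1) := by
  rw [← map_add_right_Icc, sum_map]
  rfl

lemma maxF_succ_succ (s : ℕ) : maxF (k + 1) β (s + 1) = maxF k (fun i ↦ β (i + 1)) s - 1 := by
  simp only [maxF, sum_Icc_succ_succ_eq]
  push_cast
  ring

lemma maxF_succ_zero : maxF (k + 1) β 0 = β 1 + maxF k (fun i ↦ β (i + 1)) 0 := by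
  simp only [maxF, sum_Icc_succ_succ_eq, ← add_sum_Ioc_eq_sum_Icc (Nat.zero_le k),
    ← Icc_add_one_left_eq_Ioc]
  simp

lemma maxB_zero : maxB 0 β = 0 := by simp [maxB, maxF]

lemma numMax_zero : numMax 0 β = 1 := by simp [numMax, maxB, maxF]

lemma numMax_pos : 0 < numMax k β := by
  obtain ⟨s, hs, hmax⟩ := exists_mem_eq_sup' (s := range (k + 1)) (by simp) (maxF k β)
  exact card_pos.2 ⟨s, mem_filter.2 ⟨hs, hmax.symm⟩⟩

lemma maxB_succ :
    maxB (k + 1) β = max (maxF (k + 1) β 0) (maxB k (fun i ↦ β (i + 1)) - 1) := by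
  refine le_antisymm (sup'_le _ _ fun s hs ↦ ?_) (max_le (le_sup' _ (by simp)) ?_)
  · cases s with
    | zero => exact le_max_left _ _
    | succ s =>
      rw [maxF_succ_succ]
      exact le_max_of_le_right (sub_le_sub_right (le_sup' _ (by simpa using hs)) 1)
  · refine sub_le_iff_le_add.2 (sup'_le _ _ fun s hs ↦ ?_)
    rw [← sub_le_iff_le_add, ← maxF_succ_succ]
    exact le_sup' _ (by simpa using hs)

lemma numMax_succ : numMax (k + 1) β =
    (∑ s ∈ range (k + 1),
      if maxF k (fun i ↦ β (i + 1)) s - 1 = maxB (k + 1) β then 1 else 0) +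
    if maxF (k + 1) β 0 = maxB (k + 1) β then 1 else 0 := by
  rw [numMax, card_filter, sum_range_succ']
  simp only [maxF_succ_succ]

lemma maxB_succ_of_lt (h : maxB k (fun i ↦ β (i + 1)) - 1 < maxF (k + 1) β 0) :
    maxB (k + 1) β = maxF (k + 1) β 0 := by
  rw [maxB_succ, max_eq_left h.le]

lemma numMax_succ_of_lt (h : maxB k (fun i ↦ β (i + 1)) - 1 < maxF (k + 1) β 0) :
    numMax (k + 1) β = 1 := by
  rw [numMax_succ, maxB_succ_of_lt k β h, if_pos rfl, sum_eq_zero fun s hs ↦ if_neg ?_]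
  · exact (sub_le_sub_right (le_sup' _ hs) 1).trans_lt h |>.ne

lemma maxB_succ_of_le (h : maxF (k + 1) β 0 ≤ maxB k (fun i ↦ β (i + 1)) - 1) :
    maxB (k + 1) β = maxB k (fun i ↦ β (i + 1)) - 1 := by
  rw [maxB_succ, max_eq_right h]

lemma numMax_succ_of_le (h : maxF (k + 1) β 0 ≤ maxB k (fun i ↦ β (i + 1)) - 1) :
    numMax (k + 1) β = numMax k (fun i ↦ β (i + 1)) +
      if maxF (k + 1) β 0 = maxB k (fun i ↦ β (i + 1)) - 1 then 1 else 0 := by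
  rw [numMax_succ, maxB_succ_of_le k β h, numMax, card_filter]
  simp only [sub_left_inj]

end Maximizers

lemma min_one_two_rpow_mul_rpow_le {a u : ℝ} (ha : 0 < a) (hau : a ≤ u) (hu : u ≤ 2 * a) (q : ℝ) :
    min 1 (2 ^ q) * a ^ q ≤ u ^ q := by
  rcases le_total 0 q with hq | hq
  · exact (mul_le_of_le_one_left (rpow_nonneg ha.le q) (min_le_left _ _)).trans
      (rpow_le_rpow ha.le hau hq)
  · calc min 1 (2 ^ q) * a ^ q ≤ 2 ^ q * a ^ q :=
          mul_le_mul_of_nonneg_right (min_le_right _ _) (rpow_nonneg ha.le q)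
      _ = (2 * a) ^ q := (mul_rpow zero_le_two ha.le).symm
      _ ≤ u ^ q := rpow_le_rpow_of_nonpos (ha.trans_le hau) hu hq

lemma min_one_two_rpow_mul_rpow_le_integral {a : ℝ} (ha : 0 < a) (q : ℝ) :
    min 1 (2 ^ q) * a ^ (q + 1) ≤ ∫ u in a..2 * a, u ^ q := by
  have h2a : a ≤ 2 * a := by linarith
  calc min 1 (2 ^ q) * a ^ (q + 1) = ∫ _ in a..2 * a, min 1 (2 ^ q) * a ^ q := by
        rw [intervalIntegral.integral_const, smul_eq_mul, rpow_add_one ha.ne']; ring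
    _ ≤ ∫ u in a..2 * a, u ^ q :=
        integral_mono_on h2a intervalIntegrable_const
          (intervalIntegrable_rpow (Or.inr fun h0 ↦ by
            rw [Set.uIcc_of_le h2a] at h0; linarith [h0.1]))
          fun u hu ↦ min_one_two_rpow_mul_rpow_le ha hu.1 hu.2 q

lemma integral_rpow_neg_one {a b : ℝ} (ha : 0 < a) (hab : a ≤ b) :
    ∫ u in a..b, u ^ (-1 : ℝ) = log b - log a := by
  simp_rw [rpow_neg_one]
  rw [integral_inv fun h0 ↦ by rw [Set.uIcc_of_le hab] at h0; linarith [h0.1],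
    log_div (by linarith) ha.ne']

section NestedIntegral

variable {β : ℕ → ℝ} {t : ℝ}

lemma nestInt_shift (n : ℕ) :
    ∀ j a, nestInt β t n (j + 1) a = nestInt (fun i ↦ β (i + 1)) t n j a := by
  induction n with
  | zero => intro j a; rfl
  | succ n ih => intro j a; simp only [nestInt, ih]

lemma continuousOn_rpow_const_Icc_one (t p : ℝ) : ContinuousOn (fun u : ℝ ↦ u ^ p) (Set.Icc 1 t) :=
  fun u hu ↦ (continuousAt_rpow_const u p (Or.inl (by linarith [hu.1]))).continuousWithinAt

lemma continuousOn_nestInt (ht : 1 ≤ t) (n : ℕ) :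
    ∀ j, ContinuousOn (nestInt β t n j) (Set.Icc 1 t) := by
  induction n with
  | zero => intro j; exact continuousOn_const
  | succ n ih =>
    intro j
    have h := continuousOn_primitive_interval_left (μ := volume)
      (((continuousOn_rpow_const_Icc_one t (β j)).mul (ih (j + 1))).integrableOn_Icc.mono_set
        (Set.uIcc_of_le ht).subset)
    rwa [Set.uIcc_of_le ht] at h

lemma nestInt_nonneg (n : ℕ) : ∀ j {a}, 1 ≤ a → a ≤ t → 0 ≤ nestInt β t n j a := by
  induction n with
  | zero => intro j a _ _; exact zero_le_one
  | succ n ih =>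
    intro j a ha hat
    exact integral_nonneg hat fun u hu ↦
      mul_nonneg (rpow_nonneg (by linarith [hu.1]) _) (ih _ (ha.trans hu.1) hu.2)

lemma intervalIntegrable_nestInt_integrand {n j : ℕ} {a b : ℝ} (ha : 1 ≤ a) (hab : a ≤ b)
    (hbt : b ≤ t) :
    IntervalIntegrable (fun u ↦ u ^ β j * nestInt β t n (j + 1) u) volume a b :=
  (((continuousOn_rpow_const_Icc_one t (β j)).mul
    (continuousOn_nestInt (ha.trans (hab.trans hbt)) n _)).mono
      (Set.Icc_subset_Icc ha hbt)).intervalIntegrable_of_Icc hab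

lemma integral_le_nestInt_succ {n j : ℕ} {a₀ a b : ℝ} (ha₀ : 1 ≤ a₀) (ha : a₀ ≤ a) (hab : a ≤ b)
    (hbt : b ≤ t) :
    ∫ u in a..b, u ^ β j * nestInt β t n (j + 1) u ≤ nestInt β t (n + 1) j a₀ :=
  integral_mono_interval ha hab hbt
    (ae_restrict_of_forall_mem measurableSet_Ioc fun u hu ↦
      mul_nonneg (rpow_nonneg (by linarith [hu.1]) _)
        (nestInt_nonneg n _ (ha₀.trans hu.1.le) hu.2))
    (intervalIntegrable_nestInt_integrand ha₀ (ha.trans (hab.trans hbt)) le_rfl)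

lemma mul_integral_rpow_le_nestInt_succ {n : ℕ} {a₀ a b c p : ℝ} (ha₀ : 1 ≤ a₀) (ha : a₀ ≤ a)
    (hab : a ≤ b) (hbt : b ≤ t)
    (h : ∀ u ∈ Set.Icc a b, c * u ^ p ≤ nestInt (fun i ↦ β (i + 1)) t n 1 u) :
    c * ∫ u in a..b, u ^ (β 1 + p) ≤ nestInt β t (n + 1) 1 a₀ := by
  have hpos : ∀ u ∈ Set.Icc a b, 0 < u := fun u hu ↦ by linarith [hu.1]
  rw [← intervalIntegral.integral_const_mul]
  refine le_trans (integral_mono_on hab ?_ (intervalIntegrable_nestInt_integrand (ha₀.trans ha)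
    hab hbt) fun u hu ↦ ?_) (integral_le_nestInt_succ ha₀ ha hab hbt)
  · exact (((continuousOn_rpow_const_Icc_one b _).mono (Set.Icc_subset_Icc_left
      (ha₀.trans ha))).const_smul c).intervalIntegrable_of_Icc hab
  · rw [rpow_add (hpos u hu), mul_left_comm, nestInt_shift]
    exact mul_le_mul_of_nonneg_left (h u hu) (rpow_nonneg (hpos u hu).le _)

end NestedIntegral

lemma exists_mul_rpow_le_nestInt (n : ℕ) : ∀ β : ℕ → ℝ, ∃ c > 0, ∀ a t : ℝ, 1 ≤ a →
    2 ^ n * a ≤ t → c * a ^ ((n : ℝ) + maxF n β 0) ≤ nestInt β t n 1 a := by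
  induction n with
  | zero => exact fun β ↦ ⟨1, one_pos, fun a t _ _ ↦ by simp [maxF, nestInt]⟩
  | succ n ih =>
    intro β
    obtain ⟨c, hc, H⟩ := ih fun i ↦ β (i + 1)
    set q := β 1 + ((n : ℝ) + maxF n (fun i ↦ β (i + 1)) 0)
    refine ⟨c * min 1 (2 ^ q), mul_pos hc (lt_min one_pos (rpow_pos_of_pos two_pos q)),
      fun a t ha hat ↦ ?_⟩
    have hexp : ((n + 1 : ℕ) : ℝ) + maxF (n + 1) β 0 = q + 1 := by
      rw [maxF_succ_zero]; push_cast; ring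
    have h2a : 2 * a ≤ t := (mul_le_mul_of_nonneg_right (le_self_pow₀ one_le_two n.succ_ne_zero)
      (by linarith)).trans hat
    calc c * min 1 (2 ^ q) * a ^ (((n + 1 : ℕ) : ℝ) + maxF (n + 1) β 0)
        = c * (min 1 (2 ^ q) * a ^ (q + 1)) := by rw [hexp]; ring
      _ ≤ c * ∫ u in a..2 * a, u ^ q :=
        mul_le_mul_of_nonneg_left (min_one_two_rpow_mul_rpow_le_integral (by linarith) q) hc.le
      _ ≤ nestInt β t (n + 1) 1 a :=
        mul_integral_rpow_le_nestInt_succ ha le_rfl (by linarith) h2a fun u hu ↦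
          H u t (by linarith [hu.1]) <| calc
            2 ^ n * u ≤ 2 ^ n * (2 * a) := by gcongr; exact hu.2
            _ = 2 ^ (n + 1) * a := by ring
            _ ≤ t := hat

section InverseTwoPowers

variable {t : ℝ}

lemma rpow_inv_two_pow_succ_sq (ht : 0 ≤ t) (k : ℕ) :
    (t ^ ((2 : ℝ)⁻¹ ^ (k + 1))) ^ 2 = t ^ ((2 : ℝ)⁻¹ ^ k) := by
  rw [← rpow_natCast, ← rpow_mul ht]
  congr 1
  push_cast
  ring

lemma rpow_inv_two_pow_le_self (ht : 1 ≤ t) (k : ℕ) : t ^ ((2 : ℝ)⁻¹ ^ k) ≤ t :=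
  rpow_le_self_of_one_le ht (pow_le_one₀ (by norm_num) (by norm_num))

lemma le_rpow_inv_two_pow {y : ℝ} (hy : 0 ≤ y) {k : ℕ} (h : y ^ 2 ^ k ≤ t) :
    y ≤ t ^ ((2 : ℝ)⁻¹ ^ k) := by
  have hinv : (2 : ℝ)⁻¹ ^ k = ((2 ^ k : ℕ) : ℝ)⁻¹ := by push_cast; rw [inv_pow]
  calc y = (y ^ 2 ^ k) ^ ((2 : ℝ)⁻¹ ^ k) := by
        rw [hinv, pow_rpow_inv_natCast hy (by positivity)]
    _ ≤ t ^ ((2 : ℝ)⁻¹ ^ k) := rpow_le_rpow (by positivity) h (by positivity)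

end InverseTwoPowers

def HasNestIntLowerBound (k : ℕ) (β : ℕ → ℝ) : Prop :=
  ∃ c t₁ : ℝ, 0 < c ∧ 2 ≤ t₁ ∧ ∀ t, t₁ ≤ t → ∀ a, 1 ≤ a → a ≤ t ^ ((2 : ℝ)⁻¹ ^ k) →
    c * a ^ (maxF k β 0 - maxB k β) * t ^ ((k : ℝ) + maxB k β) * log t ^ (numMax k β - 1) ≤
      nestInt β t k 1 a

lemma hasNestIntLowerBound_zero (β : ℕ → ℝ) : HasNestIntLowerBound 0 β :=
  ⟨1, 2, one_pos, le_rfl, fun t _ a _ _ ↦ by simp [maxB_zero, numMax_zero, maxF, nestInt]⟩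

section Step

variable (k : ℕ) (β : ℕ → ℝ)

lemma hasNestIntLowerBound_succ_of_lt (h : maxB k (fun i ↦ β (i + 1)) - 1 < maxF (k + 1) β 0) :
    HasNestIntLowerBound (k + 1) β := by
  obtain ⟨c, hc, H⟩ := exists_mul_rpow_le_nestInt k fun i ↦ β (i + 1)
  set q := β 1 + ((k : ℝ) + maxF k (fun i ↦ β (i + 1)) 0)
  have hexp : ((k + 1 : ℕ) : ℝ) + maxF (k + 1) β 0 = q + 1 := by
    rw [maxF_succ_zero]; push_cast; ring
  have h2 : (2 : ℝ) ≤ 2 ^ (k + 1) := le_self_pow₀ one_le_two k.succ_ne_zero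
  have ht₁ : (2 : ℝ) ≤ (2 ^ (k + 1)) ^ 2 ^ (k + 1) :=
    h2.trans (le_self_pow₀ (by linarith) (by positivity))
  refine ⟨c * min 1 (2 ^ q) / (2 ^ (k + 1)) ^ (q + 1), (2 ^ (k + 1)) ^ 2 ^ (k + 1),
    by positivity, ht₁, fun t ht a ha hax ↦ ?_⟩
  rw [maxB_succ_of_lt k β h, numMax_succ_of_lt k β h, sub_self, rpow_zero, Nat.sub_self,
    pow_zero, mul_one, mul_one, hexp]
  set x := t ^ ((2 : ℝ)⁻¹ ^ (k + 1))
  have hx : 2 ^ (k + 1) ≤ x := le_rpow_inv_two_pow (by positivity) ht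
  have hxt : x ^ 2 ≤ t := (rpow_inv_two_pow_succ_sq (by linarith) k).trans_le
    (rpow_inv_two_pow_le_self (by linarith) k)
  set L := t / 2 ^ (k + 1)
  have haL : a ≤ L := by
    rw [le_div_iff₀ (by positivity)]
    nlinarith
  have hL : 2 * L ≤ t := by
    rw [mul_div_assoc', div_le_iff₀ (by positivity)]
    nlinarith
  calc c * min 1 (2 ^ q) / (2 ^ (k + 1)) ^ (q + 1) * t ^ (q + 1)
      = c * (min 1 (2 ^ q) * L ^ (q + 1)) := by
        rw [div_rpow (by linarith) (by positivity)]; ring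
    _ ≤ c * ∫ u in L..2 * L, u ^ q :=
        mul_le_mul_of_nonneg_left (min_one_two_rpow_mul_rpow_le_integral (by linarith) q) hc.le
    _ ≤ nestInt β t (k + 1) 1 a :=
        mul_integral_rpow_le_nestInt_succ ha haL (by linarith) hL fun u hu ↦
          H u t (by linarith [hu.1]) <| calc
            2 ^ k * u ≤ 2 ^ k * (2 * L) := by gcongr; exact hu.2
            _ = t := by simp only [L]; field_simp; ring

lemma hasNestIntLowerBound_succ_of_eq (ih : HasNestIntLowerBound k fun i ↦ β (i + 1))
    (h : maxF (k + 1) β 0 = maxB k (fun i ↦ β (i + 1)) - 1) :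
    HasNestIntLowerBound (k + 1) β := by
  obtain ⟨c, t₁, hc, ht₁, H⟩ := ih
  set β' : ℕ → ℝ := fun i ↦ β (i + 1)
  have hexp : β 1 + (maxF k β' 0 - maxB k β') = -1 := by
    rw [maxF_succ_zero] at h; linarith
  have hr := numMax_pos k β'
  refine ⟨c * 2⁻¹ ^ (k + 1), t₁, by positivity, ht₁, fun t ht a ha hax ↦ ?_⟩
  rw [maxB_succ_of_le k β h.le, numMax_succ_of_le k β h.le, if_pos h, h, sub_self, rpow_zero,
    mul_one, Nat.add_sub_cancel]
  set x := t ^ ((2 : ℝ)⁻¹ ^ (k + 1))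
  have hx : 1 ≤ x := one_le_rpow (by linarith) (by positivity)
  have hxx : x ^ 2 = t ^ ((2 : ℝ)⁻¹ ^ k) := rpow_inv_two_pow_succ_sq (by linarith) k
  have hxt : x ^ 2 ≤ t := hxx.trans_le (rpow_inv_two_pow_le_self (by linarith) k)
  have hlog : 2⁻¹ ^ (k + 1) * log t ≤ log (x ^ 2) - log a := by
    have hlogx : log x = 2⁻¹ ^ (k + 1) * log t := log_rpow (by linarith) _
    have := log_le_log (by linarith) hax
    rw [log_pow]; push_cast; linarith
  set K := c * t ^ ((k : ℝ) + maxB k β') * log t ^ (numMax k β' - 1)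
  have hK : 0 ≤ K := mul_nonneg (mul_nonneg hc.le (rpow_nonneg (by linarith) _))
    (pow_nonneg (log_nonneg (by linarith)) _)
  calc c * 2⁻¹ ^ (k + 1) * t ^ (((k + 1 : ℕ) : ℝ) + (maxB k β' - 1)) * log t ^ numMax k β'
      = K * (2⁻¹ ^ (k + 1) * log t) := by
        simp only [K]
        rw [← Nat.sub_add_cancel hr, pow_succ, Nat.add_sub_cancel]
        push_cast; ring_nf
    _ ≤ K * (log (x ^ 2) - log a) := mul_le_mul_of_nonneg_left hlog hK
    _ = K * ∫ u in a..x ^ 2, u ^ (β 1 + (maxF k β' 0 - maxB k β')) := by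
        rw [hexp, integral_rpow_neg_one (by linarith) (by nlinarith)]
    _ ≤ nestInt β t (k + 1) 1 a :=
        mul_integral_rpow_le_nestInt_succ ha le_rfl (by nlinarith) hxt fun u hu ↦
          (Eq.trans_le (by ring) (H t ht u (by linarith [hu.1]) (hxx ▸ hu.2)))

lemma hasNestIntLowerBound_succ_of_gt (ih : HasNestIntLowerBound k fun i ↦ β (i + 1))
    (h : maxF (k + 1) β 0 < maxB k (fun i ↦ β (i + 1)) - 1) :
    HasNestIntLowerBound (k + 1) β := by
  obtain ⟨c, t₁, hc, ht₁, H⟩ := ih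
  set β' : ℕ → ℝ := fun i ↦ β (i + 1)
  set γ := β 1 + (maxF k β' 0 - maxB k β')
  have hexp : maxF (k + 1) β 0 - (maxB k β' - 1) = γ + 1 := by
    rw [maxF_succ_zero]; ring
  refine ⟨c * min 1 (2 ^ γ), max t₁ (2 ^ 2 ^ (k + 1)),
    mul_pos hc (lt_min one_pos (rpow_pos_of_pos two_pos γ)), ht₁.trans (le_max_left _ _),
    fun t ht a ha hax ↦ ?_⟩
  rw [maxB_succ_of_le k β h.le, numMax_succ_of_le k β h.le, if_neg h.ne, add_zero, hexp]
  have ht1 : 1 ≤ t := by linarith [le_max_left t₁ (2 ^ 2 ^ (k + 1))]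
  set x := t ^ ((2 : ℝ)⁻¹ ^ (k + 1))
  have hx : 2 ≤ x := le_rpow_inv_two_pow zero_le_two (le_of_max_le_right ht)
  have hxx : x ^ 2 = t ^ ((2 : ℝ)⁻¹ ^ k) := rpow_inv_two_pow_succ_sq (by linarith) k
  have hxt : x ^ 2 ≤ t := hxx.trans_le (rpow_inv_two_pow_le_self ht1 k)
  have h2a : 2 * a ≤ x ^ 2 := by nlinarith
  set K := c * t ^ ((k : ℝ) + maxB k β') * log t ^ (numMax k β' - 1)
  have hK : 0 ≤ K := mul_nonneg (mul_nonneg hc.le (rpow_nonneg (by linarith) _))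
    (pow_nonneg (log_nonneg ht1) _)
  calc c * min 1 (2 ^ γ) * a ^ (γ + 1) * t ^ (((k + 1 : ℕ) : ℝ) + (maxB k β' - 1)) *
        log t ^ (numMax k β' - 1)
      = K * (min 1 (2 ^ γ) * a ^ (γ + 1)) := by
        simp only [K]; push_cast; ring_nf
    _ ≤ K * ∫ u in a..2 * a, u ^ γ :=
        mul_le_mul_of_nonneg_left (min_one_two_rpow_mul_rpow_le_integral (by linarith) γ) hK
    _ ≤ nestInt β t (k + 1) 1 a :=
        mul_integral_rpow_le_nestInt_succ ha le_rfl (by linarith) (h2a.trans hxt) fun u hu ↦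
          (Eq.trans_le (by ring) (H t (le_of_max_le_left ht) u (by linarith [hu.1])
            (hxx ▸ hu.2.trans h2a)))

end Step

lemma hasNestIntLowerBound (k : ℕ) : ∀ β, HasNestIntLowerBound k β := by
  induction k with
  | zero => exact hasNestIntLowerBound_zero
  | succ k ih =>
    intro β
    rcases lt_trichotomy (maxB k (fun i ↦ β (i + 1)) - 1) (maxF (k + 1) β 0) with h | h | h
    · exact hasNestIntLowerBound_succ_of_lt k β h
    · exact hasNestIntLowerBound_succ_of_eq k β (ih _) h.symm
    · exact hasNestIntLowerBound_succ_of_gt k β (ih _) h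

theorem nested_integral_lower_bound_general (k : ℕ) (β : ℕ → ℝ) :
    ∃ C₁ t₀ : ℝ, 0 < C₁ ∧ 2 ≤ t₀ ∧ ∀ t : ℝ, t₀ ≤ t →
      C₁ * t ^ ((k : ℝ) + maxB k β) * (Real.log t) ^ (numMax k β - 1) ≤
        nestInt β t k 1 1 := by
  obtain ⟨c, t₁, hc, ht₁, H⟩ := hasNestIntLowerBound k β
  refine ⟨c, t₁, hc, ht₁, fun t ht ↦ ?_⟩
  simpa using H t ht 1 le_rfl (one_le_rpow (by linarith) (by positivity))

theorem nested_integral_lower_bound (k : ℕ) (hk : 1 ≤ k) (β : ℕ → ℝ) :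
    ∃ C₁ t₀ : ℝ, 0 < C₁ ∧ 2 ≤ t₀ ∧ ∀ t : ℝ, t₀ ≤ t →
      C₁ * t ^ ((k : ℝ) + maxB k β) * (Real.log t) ^ (numMax k β - 1) ≤
        nestInt β t k 1 1 :=
  nested_integral_lower_bound_general k β
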